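/- arXiv:1201.5260 — 3 statements merged into one kernel-verified Lean document; each statement's English description precedes it below -/
import Mathlib

section
/- Fix a word w ∈ F_2 and a prime p. If the family of word maps P_{w,q}: SL(2,q) × SL(2,q) → SL(2,q), q = p^n, is p-equidistributed, then the family of induced word maps on the quotient groups PSL(2,q) = SL(2,q)/{±1}, q = p^n, is also p-equidistributed. -/
open Matrix Polynomial

abbrev SL2 (K : Type) [CommRing K] : Type := Matrix.SpecialLinearGroup (Fin 2) K

abbrev PSL2 (K : Type) [CommRing K] : Type := SL2 K ⧸ Subgroup.center (SL2 K)

/-- Evaluation of a word `w ∈ F₂` at a pair of group elements. -/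
def wordEval {G : Type*} [Group G] (w : FreeGroup (Fin 2)) (g₁ g₂ : G) : G :=
  (FreeGroup.lift ![g₁, g₂]) w

/-- The word map `P_{w,G} : G × G → G` for `G = SL(2,K)`. -/
def wordMap (w : FreeGroup (Fin 2)) (K : Type) [CommRing K] :
    SL2 K × SL2 K → SL2 K := fun g => wordEval w g.1 g.2

/-- The point `(tr x, tr xy, tr y)`. -/
def trPoint {K : Type} [CommRing K] (x y : SL2 K) : Fin 3 → K :=
  ![Matrix.trace (x : Matrix (Fin 2) (Fin 2) K),
    Matrix.trace ((x * y : SL2 K) : Matrix (Fin 2) (Fin 2) K),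
    Matrix.trace (y : Matrix (Fin 2) (Fin 2) K)]

/-- `f ∈ ℤ[s,u,t]` is the trace polynomial of the word `w`. -/
def IsTracePolynomial (w : FreeGroup (Fin 2)) (f : MvPolynomial (Fin 3) ℤ) : Prop :=
  ∀ (K : Type) [CommRing K], ∀ x y : SL2 K,
    Matrix.trace ((wordEval w x y : SL2 K) : Matrix (Fin 2) (Fin 2) K) =
      MvPolynomial.eval (trPoint x y) (MvPolynomial.map (Int.castRingHom K) f)

/-- `f : X → Y` is `ε`-equidistributed. -/
def IsEquidistributed {X Y : Type*} (f : X → Y) (ε : ℝ) : Prop :=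
  ∃ Y' : Set Y,
    (1 - ε) * (Nat.card Y) < (Nat.card Y' : ℝ) ∧
    ∀ y ∈ Y',
      |(Nat.card {x : X // f x = y} : ℝ) - (Nat.card X : ℝ) / (Nat.card Y)| <
        ε * (Nat.card X) / (Nat.card Y)

/-- The family of word maps on `SL(2,p^n)` is `p`-equidistributed. -/
def IsPEquidistributed (w : FreeGroup (Fin 2)) (p : ℕ) (hp : p.Prime) : Prop :=
  letI : Fact p.Prime := ⟨hp⟩
  ∃ ε : ℕ → ℝ,
    Filter.Tendsto (fun n : ℕ => ε (p ^ n)) Filter.atTop (nhds 0) ∧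
    ∀ᶠ n : ℕ in Filter.atTop,
      IsEquidistributed (wordMap w (GaloisField p n)) (ε (p ^ n))

/-- The family of word maps on `SL(2,q)`, `q` ranging over all prime powers,
is equidistributed. -/
def IsEquidistributedFamily (w : FreeGroup (Fin 2)) : Prop :=
  ∃ ε : ℕ → ℝ,
    Filter.Tendsto ε Filter.atTop (nhds 0) ∧
    ∀ (p : ℕ) (hp : p.Prime),
      letI : Fact p.Prime := ⟨hp⟩
      ∀ᶠ n : ℕ in Filter.atTop,
        IsEquidistributed (wordMap w (GaloisField p n)) (ε (p ^ n))

/-- Reduction of an integral polynomial mod `p`. -/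
noncomputable def reduceMod (p : ℕ) (P : MvPolynomial (Fin 3) ℤ) : MvPolynomial (Fin 3) (ZMod p) :=
  MvPolynomial.map (Int.castRingHom (ZMod p)) P

/-- `P = h ∘ Q` with `deg Q ≥ 1`, `deg h ≥ 2`. -/
def IsCompositePoly (F : Type) [CommRing F] (P : MvPolynomial (Fin 3) F) : Prop :=
  ∃ (Q : MvPolynomial (Fin 3) F) (h : Polynomial F),
    1 ≤ Q.totalDegree ∧ 2 ≤ h.natDegree ∧ P = Polynomial.aeval Q h

def IsPComposite (p : ℕ) (P : MvPolynomial (Fin 3) ℤ) : Prop :=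
  IsCompositePoly (ZMod p) (reduceMod p P)

/-- `h` is a permutation polynomial of every finite extension of `F_p`. -/
def IsPermAllExt (p : ℕ) (h : Polynomial (ZMod p)) : Prop :=
  ∀ (K : Type) [Field K] [Algebra (ZMod p) K] [Finite K],
    Function.Bijective fun z : K => Polynomial.aeval z h

def IsPSpecial (p : ℕ) (P : MvPolynomial (Fin 3) ℤ) : Prop :=
  IsPComposite p P ∧
    ∃ (Q : MvPolynomial (Fin 3) (ZMod p)) (h : Polynomial (ZMod p)),
      1 ≤ Q.totalDegree ∧ 2 ≤ h.natDegree ∧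
      reduceMod p P = Polynomial.aeval Q h ∧ IsPermAllExt p h

def AlmostNoncomposite (P : MvPolynomial (Fin 3) ℤ) : Prop :=
  ∀ p : ℕ, p.Prime → ¬ IsPComposite p P ∨ IsPSpecial p P

/-- The reduced word `x^{a₁}y^{b₁} ⋯ x^{a_r}y^{b_r}`. -/
def wordOf {r : ℕ} (a b : Fin r → ℤ) : FreeGroup (Fin 2) :=
  (List.ofFn fun i : Fin r =>
    FreeGroup.of (0 : Fin 2) ^ a i * FreeGroup.of (1 : Fin 2) ^ b i).prod

/-- The word map on `PSL(2,q) = SL(2,q)/{±1}` (the quotient of `SL(2,q)` by its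
center, which for `2 × 2` matrices over a field is exactly `{±1}`). -/
def wordMapPSL (w : FreeGroup (Fin 2)) (K : Type) [CommRing K] :
    PSL2 K × PSL2 K → PSL2 K := fun g => wordEval w g.1 g.2

/-- The family of induced word maps on `PSL(2,p^n)` is `p`-equidistributed. -/
def IsPEquidistributedPSL (w : FreeGroup (Fin 2)) (p : ℕ) (hp : p.Prime) : Prop :=
  letI : Fact p.Prime := ⟨hp⟩
  ∃ ε : ℕ → ℝ,
    Filter.Tendsto (fun n : ℕ => ε (p ^ n)) Filter.atTop (nhds 0) ∧
    ∀ᶠ n : ℕ in Filter.atTop,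
      IsEquidistributed (wordMapPSL w (GaloisField p n)) (ε (p ^ n))

/-!
The projection `SL(2,q) → PSL(2,q)` has fibres of size `c = #Z ≤ 2`, `Z` the centre, and
intertwines the two word maps. Hence `c²` times a fibre of the word map on `PSL(2,q)` is the sum
of the `c` fibres of the word map on `SL(2,q)` over the lifts of its point; if all of these are
within relative error `ε` of the mean, so is their average. A point of `PSL(2,q)` with a bad lift
costs at most one bad point of `SL(2,q)`, so the good set loses at most a fraction `c ε`.
-/

section Counting

variable {X Y Z : Type*}

theorem Nat.card_fiber_comp [Finite X] [Fintype Y] [DecidableEq Z] (f : X → Y) (g : Y → Z)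
    (z : Z) :
    Nat.card {x // g (f x) = z} = ∑ y : {y // g y = z}, Nat.card {x // f x = y} := by
  rw [← Nat.card_congr (Equiv.sigmaSubtypeFiberEquivSubtype (p := fun x => g (f x) = z)
    (q := fun y => g y = z) f fun _ => Iff.rfl), Nat.card_sigma]

theorem Nat.card_eq_mul_of_card_fiber [Finite X] [Finite Y] (π : X → Y) {a : ℕ}
    (hπ : ∀ y, Nat.card {x // π x = y} = a) : Nat.card X = a * Nat.card Y := by
  have := Fintype.ofFinite Y
  rw [← Nat.card_congr (Equiv.sigmaFiberEquiv π), Nat.card_sigma]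
  simp [hπ, Nat.card_eq_fintype_card, mul_comm]

theorem Nat.card_fiber_prodMap {X' Y' : Type*} (f : X → Y) (f' : X' → Y') (z : Y × Y') :
    Nat.card {x // Prod.map f f' x = z} =
      Nat.card {x // f x = z.1} * Nat.card {x' // f' x' = z.2} := by
  rw [← Nat.card_prod, Nat.card_congr ((Equiv.subtypeEquivRight
    (q := fun x => f x.1 = z.1 ∧ f' x.2 = z.2) fun _ => Prod.ext_iff).trans
    (Equiv.subtypeProdEquivProd (p := fun x => f x = z.1) (q := fun x' => f' x' = z.2)))]

theorem QuotientGroup.card_fiber_mk [Group X] (N : Subgroup X) (y : X ⧸ N) :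
    Nat.card {x : X // (x : X ⧸ N) = y} = Nat.card N := by
  have h := QuotientGroup.card_preimage_mk N {y}
  rw [Nat.card_coe_set_eq {y}, Set.ncard_singleton, mul_one] at h
  exact h

end Counting

theorem Finset.abs_sum_sub_card_mul_lt {ι : Type*} {s : Finset ι} (hs : s.Nonempty) {g : ι → ℝ}
    {m δ : ℝ} (h : ∀ i ∈ s, |g i - m| < δ) : |∑ i ∈ s, g i - s.card * m| < s.card * δ := by
  have hsub : ∑ i ∈ s, g i - s.card * m = ∑ i ∈ s, (g i - m) := by
    simp [Finset.sum_sub_distrib]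
  calc |∑ i ∈ s, g i - s.card * m| ≤ ∑ i ∈ s, |g i - m| := hsub ▸ Finset.abs_sum_le_sum_abs _ _
    _ < ∑ _i ∈ s, δ := Finset.sum_lt_sum_of_nonempty hs h
    _ = s.card * δ := by simp

theorem Nat.mul_card_fiber_of_semiconj {X Y X' Y' : Type*} [Finite X] [Finite X'] [Fintype Y]
    [DecidableEq Y'] {f : X → Y} {f' : X' → Y'} {πX : X → X'} {πY : Y → Y'} {a : ℕ}
    (hπX : ∀ x', Nat.card {x // πX x = x'} = a) (hcomm : ∀ x, f' (πX x) = πY (f x)) (y' : Y') :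
    a * Nat.card {x' // f' x' = y'} = ∑ y : {y // πY y = y'}, Nat.card {x // f x = y} := by
  have := Fintype.ofFinite X'
  calc a * Nat.card {x' // f' x' = y'}
      = ∑ x' : {x' // f' x' = y'}, Nat.card {x // πX x = x'} := by
        simp [hπX, Nat.card_eq_fintype_card, mul_comm]
    _ = Nat.card {x // f' (πX x) = y'} := (Nat.card_fiber_comp πX f' y').symm
    _ = ∑ y : {y // πY y = y'}, Nat.card {x // f x = y} := by
        simp only [hcomm]
        exact Nat.card_fiber_comp f πY y'

namespace IsEquidistributed

variable {X Y : Type*} {f : X → Y} {ε δ : ℝ}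

theorem pos [Finite Y] (h : IsEquidistributed f ε) : 0 < ε := by
  obtain ⟨T, hT, -⟩ := h
  have hTY : (Nat.card T : ℝ) ≤ Nat.card Y := by
    exact_mod_cast Nat.card_le_card_of_injective _ Subtype.val_injective
  nlinarith

theorem mono (h : IsEquidistributed f ε) (hεδ : ε ≤ δ) : IsEquidistributed f δ := by
  obtain ⟨T, hT, hfib⟩ := h
  refine ⟨T, lt_of_le_of_lt ?_ hT, fun y hy => (hfib y hy).trans_le ?_⟩ <;> gcongr

end IsEquidistributed

theorem lt_card_setOf_fiber_subset {Y Y' : Type*} [Finite Y] [Finite Y'] {π : Y → Y'} {b : ℕ}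
    (hπ : ∀ y', Nat.card {y // π y = y'} = b) {T : Set Y} {ε : ℝ}
    (hT : (1 - ε) * Nat.card Y < Nat.card T) :
    (1 - b * ε) * Nat.card Y' < Nat.card {y' | ∀ y, π y = y' → y ∈ T} := by
  set S := {y' | ∀ y, π y = y' → y ∈ T}
  have hSc : Sᶜ ⊆ π '' Tᶜ := by
    intro y' hy'
    simp only [S, Set.mem_compl_iff, Set.mem_ofPred_eq, not_forall] at hy'
    obtain ⟨y, rfl, hy⟩ := hy'
    exact ⟨y, hy, rfl⟩
  have hS : (Sᶜ.ncard : ℝ) ≤ Tᶜ.ncard := by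
    exact_mod_cast (Set.ncard_le_ncard hSc (Set.toFinite _)).trans
      (Set.ncard_image_le (Set.toFinite _))
  have hSY' : (S.ncard : ℝ) + Sᶜ.ncard = Nat.card Y' := by
    exact_mod_cast Set.ncard_add_ncard_compl S
  have hTY : (T.ncard : ℝ) + Tᶜ.ncard = b * Nat.card Y' := by
    exact_mod_cast (Set.ncard_add_ncard_compl T).trans (Nat.card_eq_mul_of_card_fiber π hπ)
  rw [Nat.card_eq_mul_of_card_fiber π hπ, Nat.card_coe_set_eq] at hT
  rw [Nat.card_coe_set_eq]
  push_cast at hT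
  linarith

section Semiconj

variable {X Y X' Y' : Type*} [Finite X] [Finite Y] [Finite X'] [Finite Y'] {f : X → Y}
  {f' : X' → Y'} {πX : X → X'} {πY : Y → Y'} {a b : ℕ}

theorem abs_card_fiber_sub_lt_of_semiconj (ha : 0 < a) (hb : 0 < b)
    (hπX : ∀ x', Nat.card {x // πX x = x'} = a) (hπY : ∀ y', Nat.card {y // πY y = y'} = b)
    (hcomm : ∀ x, f' (πX x) = πY (f x)) {ε : ℝ} {y' : Y'}
    (hclose : ∀ y, πY y = y' → |(Nat.card {x // f x = y} : ℝ) - Nat.card X / Nat.card Y| <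
      ε * Nat.card X / Nat.card Y) :
    |(Nat.card {x' // f' x' = y'} : ℝ) - Nat.card X' / Nat.card Y'| <
      ε * Nat.card X' / Nat.card Y' := by
  classical
  have := Fintype.ofFinite Y
  have hY' : (0 : ℝ) < Nat.card Y' := by
    have : Nonempty Y' := ⟨y'⟩
    exact_mod_cast Nat.card_pos
  set m : ℝ := Nat.card X / Nat.card Y
  set m' : ℝ := Nat.card X' / Nat.card Y'
  have hm : b * m = a * m' := by
    simp only [m, m', Nat.card_eq_mul_of_card_fiber πX hπX, Nat.card_eq_mul_of_card_fiber πY hπY]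
    push_cast
    field_simp
  have hcard : (Finset.univ : Finset {y // πY y = y'}).card = b := by
    rw [Finset.card_univ, ← Nat.card_eq_fintype_card, hπY]
  have hsum : |a * (Nat.card {x' // f' x' = y'} : ℝ) - b * m| < b * (ε * m) := by
    have hne : (Finset.univ : Finset {y // πY y = y'}).Nonempty := by
      rw [← Finset.card_pos, hcard]; exact hb
    have hcast : (a * Nat.card {x' // f' x' = y'} : ℝ) =
        ∑ y : {y // πY y = y'}, (Nat.card {x // f x = y} : ℝ) := by
      exact_mod_cast Nat.mul_card_fiber_of_semiconj hπX hcomm y'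
    rw [hcast, ← hcard]
    exact Finset.abs_sum_sub_card_mul_lt hne fun y _ => by
      simpa [m, mul_div_assoc] using hclose y y.2
  have ha' : (0 : ℝ) < a := by exact_mod_cast ha
  rw [mul_div_assoc]
  refine lt_of_mul_lt_mul_left ?_ ha'.le
  calc (a : ℝ) * |(Nat.card {x' // f' x' = y'} : ℝ) - m'|
      = |a * (Nat.card {x' // f' x' = y'} : ℝ) - b * m| := by
        rw [hm, ← mul_sub, abs_mul, abs_of_pos ha']
    _ < b * (ε * m) := hsum
    _ = a * (ε * m') := by rw [mul_left_comm, hm, mul_left_comm]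

theorem IsEquidistributed.of_semiconj (ha : 0 < a) (hb : 0 < b)
    (hπX : ∀ x', Nat.card {x // πX x = x'} = a) (hπY : ∀ y', Nat.card {y // πY y = y'} = b)
    (hcomm : ∀ x, f' (πX x) = πY (f x)) {ε : ℝ} (hf : IsEquidistributed f ε) :
    IsEquidistributed f' (b * ε) := by
  have hε := hf.pos
  obtain ⟨T, hT, hfib⟩ := hf
  refine ⟨_, lt_card_setOf_fiber_subset hπY hT, fun y' hy' =>
    (abs_card_fiber_sub_lt_of_semiconj ha hb hπX hπY hcomm fun y hy => hfib y (hy' y hy)).trans_le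
      ?_⟩
  gcongr
  exact le_mul_of_one_le_left hε.le (by exact_mod_cast hb)

end Semiconj

theorem wordEval_map {G H : Type*} [Group G] [Group H] (φ : G →* H) (w : FreeGroup (Fin 2))
    (g₁ g₂ : G) : φ (wordEval w g₁ g₂) = wordEval w (φ g₁) (φ g₂) := by
  have hlift : φ.comp (FreeGroup.lift ![g₁, g₂]) = FreeGroup.lift ![φ g₁, φ g₂] := by
    ext i
    fin_cases i <;> simp
  exact DFunLike.congr_fun hlift w

theorem IsEquidistributed.wordEval_quotient {G : Type*} [Group G] [Finite G] (N : Subgroup G)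
    [N.Normal] (w : FreeGroup (Fin 2)) {ε : ℝ}
    (h : IsEquidistributed (fun g : G × G => wordEval w g.1 g.2) ε) :
    IsEquidistributed (fun g : (G ⧸ N) × (G ⧸ N) => wordEval w g.1 g.2) (Nat.card N * ε) :=
  h.of_semiconj (πX := Prod.map (↑) (↑)) (a := Nat.card N * Nat.card N)
    (Nat.mul_pos Nat.card_pos Nat.card_pos) Nat.card_pos
    (fun _ => by rw [Nat.card_fiber_prodMap, QuotientGroup.card_fiber_mk,
      QuotientGroup.card_fiber_mk])
    (QuotientGroup.card_fiber_mk N) fun g => (wordEval_map (QuotientGroup.mk' N) w g.1 g.2).symm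

theorem card_center_SL2_le_two (K : Type) [CommRing K] [IsDomain K] :
    Nat.card (Subgroup.center (SL2 K)) ≤ 2 := by
  rw [Nat.card_congr (Matrix.SpecialLinearGroup.center_equiv_rootsOfUnity' (0 : Fin 2)).toEquiv]
  exact card_rootsOfUnity K 2

theorem psl_p_equidistributed_of_sl (w : FreeGroup (Fin 2)) (p : ℕ) (hp : p.Prime)
    (h : IsPEquidistributed w p hp) :
    IsPEquidistributedPSL w p hp := by
  have : Fact p.Prime := ⟨hp⟩
  obtain ⟨ε, hε, hev⟩ := h
  refine ⟨fun q => 2 * ε q, by simpa using hε.const_mul 2, hev.mono fun n hn => ?_⟩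
  refine (hn.wordEval_quotient (Subgroup.center _) w).mono (?_ : _ ≤ 2 * ε (p ^ n))
  gcongr
  · exact hn.pos.le
  · exact_mod_cast card_center_SL2_le_two _
end

section
/- Let F be an algebraically closed field of characteristic p > 0 and let n be a positive integer divisible by p. Suppose D_n = h ∘ g, where h, g ∈ F[x] are monic polynomials with deg h ≥ 2 and deg g ≥ 1. Then there exist positive integers m, k with mk = n and an element c ∈ F such that h(x) = D_m(x − c) and g(x) = D_k(x) + c. -/
open Matrix Polynomial

/-!
Write `a = deg h`, `b = deg g`, so that `n = a * b`.

If `p ∤ a`, compare `h ∘ g` with `D_a ∘ D_b = D_n`. For monic `h` of degree `a`, `h ∘ g - g ^ a`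
has degree at most `(a - 1) b`, hence so has `g ^ a - D_b ^ a = (g - D_b) * ∑ g ^ i D_b ^ (a-1-i)`.
The sum has degree `(a - 1) b` with leading coefficient `a ≠ 0`, so `g - D_b` is a constant `c`,
and cancelling `D_b` on the right gives `h = D_a (x - c)`.

If `p ∣ a`, then `D_n = D_{n/p}(x ^ p) = D_{n/p} ^ p` has zero derivative, so `g' = 0` or `h' = 0`:
either `g = g₁(x ^ p)` or, `F` being perfect, `h = h₁ ^ p`. Then `h ∘ g₁` resp. `h₁ ∘ g` is a
decomposition of `D_{n/p}`, and we conclude by induction on `n`.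
-/

namespace Polynomial

section Dickson

variable {R : Type*} [CommRing R]

theorem natDegree_dickson_one_one_le : ∀ n : ℕ, (dickson 1 (1 : R) n).natDegree ≤ n
  | 0 => by norm_num [dickson_zero]
  | 1 => by simpa using natDegree_X_le
  | n + 2 => by
    rw [dickson_add_two]
    refine (natDegree_sub_le _ _).trans (max_le ?_ ?_)
    · exact (natDegree_mul_le_of_le natDegree_X_le (natDegree_dickson_one_one_le (n + 1))).trans
        (by omega)
    · exact (natDegree_mul_le_of_le (natDegree_C 1).le (natDegree_dickson_one_one_le n)).trans
        (by omega)

theorem coeff_dickson_one_one_succ_self : ∀ n : ℕ, (dickson 1 (1 : R) (n + 1)).coeff (n + 1) = 1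
  | 0 => by simp
  | n + 1 => by
    rw [dickson_add_two, coeff_sub, coeff_X_mul, coeff_dickson_one_one_succ_self n, coeff_C_mul,
      coeff_eq_zero_of_natDegree_lt ((natDegree_dickson_one_one_le n).trans_lt (by omega)),
      mul_zero, sub_zero]

variable [Nontrivial R]

theorem natDegree_dickson_one_one (n : ℕ) : (dickson 1 (1 : R) n).natDegree = n := by
  cases n with
  | zero => norm_num [dickson_zero]
  | succ n =>
    exact natDegree_eq_of_le_of_coeff_ne_zero (natDegree_dickson_one_one_le _)
      (by simp [coeff_dickson_one_one_succ_self])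

theorem monic_dickson_one_one {n : ℕ} (hn : n ≠ 0) : (dickson 1 (1 : R) n).Monic := by
  obtain ⟨n, rfl⟩ := Nat.exists_eq_succ_of_ne_zero hn
  rw [Monic, leadingCoeff, natDegree_dickson_one_one, coeff_dickson_one_one_succ_self]

end Dickson

section CharP

variable {R : Type*} [CommRing R] (p : ℕ) [Fact p.Prime] [CharP R p]

theorem dickson_one_one_char_mul_eq_expand (n : ℕ) :
    dickson 1 (1 : R) (p * n) = expand R p (dickson 1 (1 : R) n) := by
  rw [mul_comm, dickson_one_one_mul, dickson_one_one_charP (R := R) p, expand_eq_comp_X_pow]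

theorem dickson_one_one_char_mul_eq_pow (n : ℕ) :
    dickson 1 (1 : R) (p * n) = dickson 1 (1 : R) n ^ p := by
  rw [dickson_one_one_mul, dickson_one_one_charP (R := R) p, X_pow_comp]

theorem derivative_dickson_one_one_char_mul (n : ℕ) :
    derivative (dickson 1 (1 : R) (p * n)) = 0 := by
  rw [dickson_one_one_char_mul_eq_expand, derivative_expand, CharP.cast_eq_zero R[X] p, zero_mul,
    mul_zero]

theorem comp_eq_dickson_of_comp_expand_eq_dickson {h g : R[X]} {n : ℕ}
    (heq : h.comp (expand R p g) = dickson 1 (1 : R) (p * n)) :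
    h.comp g = dickson 1 (1 : R) n := by
  apply expand_injective (Fact.out : p.Prime).pos
  rw [expand_eq_comp_X_pow, comp_assoc, ← expand_eq_comp_X_pow, heq,
    dickson_one_one_char_mul_eq_expand]

theorem comp_eq_dickson_of_pow_comp_eq_dickson [IsDomain R] {r g : R[X]} {n : ℕ}
    (heq : (r ^ p).comp g = dickson 1 (1 : R) (p * n)) : r.comp g = dickson 1 (1 : R) n := by
  apply frobenius_inj R[X] p
  rw [frobenius_def, frobenius_def, ← pow_comp, heq, dickson_one_one_char_mul_eq_pow]

end CharP

theorem comp_left_inj_of_natDegree_ne_zero {R : Type*} [CommRing R] [NoZeroDivisors R]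
    {f₁ f₂ q : R[X]} (hq : q.natDegree ≠ 0) : f₁.comp q = f₂.comp q ↔ f₁ = f₂ := by
  refine ⟨fun h => ?_, fun h => h ▸ rfl⟩
  have hsub : (f₁ - f₂).comp q = 0 := by rw [sub_comp, h, sub_self]
  rcases comp_eq_zero_iff.1 hsub with h0 | ⟨-, hqC⟩
  · exact sub_eq_zero.1 h0
  · exact absurd (by rw [hqC, natDegree_C]) hq

theorem exists_eq_pow_of_derivative_eq_zero {R : Type*} [CommRing R] [NoZeroDivisors R] (p : ℕ)
    [Fact p.Prime] [CharP R p] [PerfectRing R p] {f : R[X]} (hf : derivative f = 0) :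
    ∃ r, f = r ^ p :=
  ⟨_, (expand_contract p hf (Fact.out : p.Prime).ne_zero).symm.trans (polynomial_expand_eq R p _)⟩

section ApproximateRoot

variable {R : Type*} [CommRing R]

theorem natDegree_comp_sub_pow_natDegree_le {h : R[X]} (hh : h.Monic) (g : R[X]) :
    (h.comp g - g ^ h.natDegree).natDegree ≤ (h.natDegree - 1) * g.natDegree := by
  have hlow : h.comp g - g ^ h.natDegree = h.eraseLead.comp g := by
    rw [← self_sub_monomial_natDegree_leadingCoeff, hh.leadingCoeff, ← C_mul_X_pow_eq_monomial,
      C_1, one_mul, sub_comp, X_pow_comp]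
  rw [hlow]
  exact natDegree_comp_le.trans (Nat.mul_le_mul_right _ (eraseLead_natDegree_le h))

theorem coeff_geom_sum₂_of_monic {g₁ g₂ : R[X]} (hg₁ : g₁.Monic) (hg₂ : g₂.Monic)
    (hg : g₁.natDegree = g₂.natDegree) (a : ℕ) :
    (∑ i ∈ Finset.range a, g₁ ^ i * g₂ ^ (a - 1 - i)).coeff ((a - 1) * g₁.natDegree) = a := by
  rw [finsetSum_coeff]
  trans ∑ _i ∈ Finset.range a, (1 : R)
  · refine Finset.sum_congr rfl fun i hi => ?_
    have hdeg : (g₁ ^ i * g₂ ^ (a - 1 - i)).natDegree = (a - 1) * g₁.natDegree := by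
      rw [(hg₁.pow i).natDegree_mul (hg₂.pow _), hg₁.natDegree_pow, hg₂.natDegree_pow, ← hg,
        ← add_mul]
      congr 1
      have := Finset.mem_range.1 hi
      omega
    rw [← hdeg]
    exact (hg₁.pow i).mul (hg₂.pow _)
  · simp

variable [IsDomain R]

theorem natDegree_sub_eq_zero_of_natDegree_pow_sub_pow_le {g₁ g₂ : R[X]} (hg₁ : g₁.Monic)
    (hg₂ : g₂.Monic) (hg : g₁.natDegree = g₂.natDegree) {a : ℕ} (ha : (a : R) ≠ 0)
    (hle : (g₁ ^ a - g₂ ^ a).natDegree ≤ (a - 1) * g₁.natDegree) :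
    (g₁ - g₂).natDegree = 0 := by
  set S := ∑ i ∈ Finset.range a, g₁ ^ i * g₂ ^ (a - 1 - i)
  have hS : S.coeff ((a - 1) * g₁.natDegree) ≠ 0 := by
    rwa [coeff_geom_sum₂_of_monic hg₁ hg₂ hg]
  have hS0 : S ≠ 0 := fun h => hS (by rw [h, coeff_zero])
  by_contra hne
  have he : g₁ - g₂ ≠ 0 := fun h => hne (by rw [h, natDegree_zero])
  rw [← geom_sum₂_mul, natDegree_mul hS0 he] at hle
  have := le_natDegree_of_ne_zero hS
  omega

theorem exists_eq_add_C_of_comp_eq_comp {h₁ h₂ g₁ g₂ : R[X]} (hh₁ : h₁.Monic) (hh₂ : h₂.Monic)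
    (hg₁ : g₁.Monic) (hg₂ : g₂.Monic) (hh : h₁.natDegree = h₂.natDegree)
    (hg : g₁.natDegree = g₂.natDegree) (ha : (h₁.natDegree : R) ≠ 0)
    (heq : h₁.comp g₁ = h₂.comp g₂) : ∃ c, g₁ = g₂ + C c := by
  refine ⟨(g₁ - g₂).coeff 0, ?_⟩
  suffices hconst : (g₁ - g₂).natDegree = 0 by
    rw [← eq_C_of_natDegree_eq_zero hconst]
    ring
  refine natDegree_sub_eq_zero_of_natDegree_pow_sub_pow_le hg₁ hg₂ hg ha ?_
  have hdiff : g₁ ^ h₁.natDegree - g₂ ^ h₁.natDegree =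
      (h₂.comp g₂ - g₂ ^ h₂.natDegree) - (h₁.comp g₁ - g₁ ^ h₁.natDegree) := by
    rw [heq, hh]
    ring
  rw [hdiff]
  refine (natDegree_sub_le _ _).trans (max_le ?_ (natDegree_comp_sub_pow_natDegree_le hh₁ g₁))
  rw [hh, hg]
  exact natDegree_comp_sub_pow_natDegree_le hh₂ g₂

end ApproximateRoot

def IsShiftedDicksonPair {R : Type*} [CommRing R] (h g : R[X]) : Prop :=
  ∃ c, h = (dickson 1 (1 : R) h.natDegree).comp (X - C c) ∧ g = dickson 1 (1 : R) g.natDegree + C c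

namespace IsShiftedDicksonPair

variable {R : Type*} [CommRing R] (p : ℕ) [Fact p.Prime] [CharP R p]

theorem expand {h g : R[X]} (H : IsShiftedDicksonPair h g) :
    IsShiftedDicksonPair h (expand R p g) := by
  obtain ⟨c, hh, hg⟩ := H
  refine ⟨c, hh, ?_⟩
  conv_lhs => rw [hg]
  rw [map_add, expand_C, natDegree_expand, mul_comm, dickson_one_one_char_mul_eq_expand]

theorem pow [IsDomain R] {r g : R[X]} (H : IsShiftedDicksonPair r g) :
    IsShiftedDicksonPair (r ^ p) g := by
  obtain ⟨c, hr, hg⟩ := H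
  refine ⟨c, ?_, hg⟩
  conv_lhs => rw [hr]
  rw [natDegree_pow, ← pow_comp, dickson_one_one_char_mul_eq_pow]

end IsShiftedDicksonPair

theorem isShiftedDicksonPair_of_comp_eq_dickson_of_cast_natDegree_ne_zero {R : Type*}
    [CommRing R] [IsDomain R] {h g : R[X]} (hh : h.Monic) (hg : g.Monic)
    (ha : (h.natDegree : R) ≠ 0) (hb : g.natDegree ≠ 0) {n : ℕ}
    (heq : h.comp g = dickson 1 (1 : R) n) : IsShiftedDicksonPair h g := by
  set a := h.natDegree
  set b := g.natDegree
  have ha0 : a ≠ 0 := fun h0 => ha (by rw [h0, Nat.cast_zero])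
  have hn : n = a * b := by rw [← natDegree_dickson_one_one (R := R) n, ← heq, natDegree_comp]
  rw [hn, dickson_one_one_mul] at heq
  obtain ⟨c, hc⟩ := exists_eq_add_C_of_comp_eq_comp hh (monic_dickson_one_one ha0) hg
    (monic_dickson_one_one hb) (natDegree_dickson_one_one a).symm
    (natDegree_dickson_one_one b).symm ha heq
  have hshift : (h.comp (X + C c)).comp (dickson 1 1 b) = (dickson 1 1 a).comp (dickson 1 1 b) := by
    rw [comp_assoc, add_comp, X_comp, C_comp, ← hc, heq]
  rw [comp_left_inj_of_natDegree_ne_zero (by rwa [natDegree_dickson_one_one])] at hshift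
  refine ⟨c, ?_, hc⟩
  rw [← hshift, comp_assoc, add_comp, X_comp, C_comp, sub_add_cancel, comp_X]

theorem isShiftedDicksonPair_of_comp_eq_dickson {F : Type*} [Field F] (p : ℕ) [Fact p.Prime]
    [CharP F p] [PerfectRing F p] {h g : F[X]} (hh : h.Monic) (hg : g.Monic)
    (hdh : h.natDegree ≠ 0) (hdg : g.natDegree ≠ 0) {n : ℕ}
    (heq : h.comp g = dickson 1 (1 : F) n) : IsShiftedDicksonPair h g := by
  induction n using Nat.strong_induction_on generalizing h g with
  | _ n ih =>
  by_cases ha : (h.natDegree : F) ≠ 0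
  · exact isShiftedDicksonPair_of_comp_eq_dickson_of_cast_natDegree_ne_zero hh hg ha hdg heq
  have hp : p.Prime := Fact.out
  have hdeg : h.natDegree * g.natDegree = n := by
    rw [← natDegree_comp, heq, natDegree_dickson_one_one]
  obtain ⟨n', rfl⟩ : p ∣ n :=
    hdeg ▸ dvd_mul_of_dvd_left ((CharP.cast_eq_zero_iff F p _).1 (not_not.1 ha)) _
  have hn' : n' < p * n' :=
    lt_mul_left (Nat.pos_of_ne_zero (right_ne_zero_of_mul (hdeg ▸ mul_ne_zero hdh hdg)))
      hp.one_lt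
  have hder : derivative g * (derivative h).comp g = 0 := by
    rw [← derivative_comp, heq, derivative_dickson_one_one_char_mul]
  rcases mul_eq_zero.1 hder with hg' | hh'g
  · obtain ⟨g₁, rfl⟩ : ∃ g₁, g = expand F p g₁ :=
      ⟨_, (expand_contract p hg' hp.ne_zero).symm⟩
    rw [monic_expand_iff hp.pos] at hg
    rw [natDegree_expand] at hdg
    exact (ih n' hn' hh hg hdh (left_ne_zero_of_mul hdg)
      (comp_eq_dickson_of_comp_expand_eq_dickson p heq)).expand p
  · have hh' : derivative h = 0 := by
      refine (comp_eq_zero_iff.1 hh'g).resolve_right ?_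
      rintro ⟨-, hgC⟩
      exact hdg (by rw [hgC, natDegree_C])
    obtain ⟨r, rfl⟩ := exists_eq_pow_of_derivative_eq_zero p hh'
    have hr : r.Monic := injective_pow_p F p (by rw [← leadingCoeff_pow, one_pow]; exact hh)
    rw [hr.natDegree_pow] at hdh
    exact (ih n' hn' hr hg (right_ne_zero_of_mul hdh) hdg
      (comp_eq_dickson_of_pow_comp_eq_dickson p heq)).pow p

end Polynomial

theorem dickson_decomposition_char_p_general (F : Type) [Field F] [IsAlgClosed F]
    (p : ℕ) (hp : p.Prime) [CharP F p] (n : ℕ)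
    (h g : Polynomial F) (hmonic : h.Monic) (gmonic : g.Monic)
    (hdh : 2 ≤ h.natDegree) (hdg : 1 ≤ g.natDegree)
    (heq : Polynomial.dickson 1 (1 : F) n = h.comp g) :
    ∃ (m k : ℕ) (c : F), 0 < m ∧ 0 < k ∧ m * k = n ∧
      h = (Polynomial.dickson 1 (1 : F) m).comp (Polynomial.X - Polynomial.C c) ∧
      g = Polynomial.dickson 1 (1 : F) k + Polynomial.C c := by
  have : Fact p.Prime := ⟨hp⟩
  obtain ⟨c, hh, hg⟩ :=
    isShiftedDicksonPair_of_comp_eq_dickson p hmonic gmonic (by omega) (by omega) heq.symm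
  refine ⟨h.natDegree, g.natDegree, c, by omega, by omega, ?_, hh, hg⟩
  rw [← natDegree_comp, ← heq, natDegree_dickson_one_one]

theorem dickson_decomposition_char_p (F : Type) [Field F] [IsAlgClosed F]
    (p : ℕ) (hp : p.Prime) [CharP F p] (n : ℕ) (hn : 0 < n) (hpn : p ∣ n)
    (h g : Polynomial F) (hmonic : h.Monic) (gmonic : g.Monic)
    (hdh : 2 ≤ h.natDegree) (hdg : 1 ≤ g.natDegree)
    (heq : Polynomial.dickson 1 (1 : F) n = h.comp g) :
    ∃ (m k : ℕ) (c : F), 0 < m ∧ 0 < k ∧ m * k = n ∧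
      h = (Polynomial.dickson 1 (1 : F) m).comp (Polynomial.X - Polynomial.C c) ∧
      g = Polynomial.dickson 1 (1 : F) k + Polynomial.C c :=
  dickson_decomposition_char_p_general F p hp n h g hmonic gmonic hdh hdg heq
end

section
/- Let w ∈ F_2 with trace polynomial f_w, let p be a prime and q = p^n. Suppose that over F_p the trace polynomial decomposes as f_w = h ∘ Q, where Q ∈ F_p[s,u,t], h is a univariate polynomial over F_p of degree d_1 ≥ 2, and the evaluation map z ↦ h(z) on F_q is not surjective. Then the image of the word map P_{w,q}: SL(2,q) × SL(2,q) → SL(2,q) omits at least q(q−1)·((q−1)/d_1 − 2) elements of SL(2,q). -/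
open Matrix Polynomial

/-!
An element `w(x, y)` of the image of the word map has trace `h(Q(tr x, tr xy, tr y))`, a value
of `h`; so for each `t ∈ F_q` missed by `h` all matrices of trace `t` are missed, and there are
at least `q (q - 1)` of them. It remains to see that a non-surjective `h` of degree `d` misses
at least `(q - 1) / d` values (Wan's bound). The elementary symmetric functions `e_j` of the
multiset of values `h(z)`, `z ∈ F_q`, vanish for `1 ≤ j ≤ (q - 2) / d`, so `∏_z (X - h(z)) - (X
^ q - X)` is a nonzero polynomial of degree at most `q - 1 - (q - 2) / d` vanishing on the
value set. To see that `e_j = 0`, lift `h` to the Witt vectors `W(F_q)` and evaluate at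
Teichmüller representatives: the power sums of degree `< q - 1` of these points vanish, so the
power sums of the lifted values are divisible by `q`, and Newton's identities give `q ∣ j e_j`;
as `v_p(j) < v_p(q)`, `e_j` reduces to `0` mod `p`.
-/

theorem Polynomial.sum_eval_eq_card_mul_coeff_zero {ι R : Type*} [Fintype ι] [CommRing R]
    {γ : ι → R} {N : ℕ} (hγ : ∀ l, 0 < l → l < N → ∑ i, γ i ^ l = 0) {H : R[X]}
    (hH : H.natDegree < N) : ∑ i, H.eval (γ i) = Fintype.card ι * H.coeff 0 := by
  obtain ⟨M, rfl⟩ : ∃ M, N = M + 1 := ⟨N - 1, by omega⟩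
  simp_rw [eval_eq_sum_range' hH]
  rw [Finset.sum_comm, Finset.sum_range_succ']
  have hvanish : ∀ i ∈ Finset.range M, ∑ x, H.coeff (i + 1) * γ x ^ (i + 1) = 0 :=
    fun i hi => by rw [← Finset.mul_sum, hγ (i + 1) i.succ_pos (by simpa using hi), mul_zero]
  simp [Finset.sum_eq_zero hvanish]

theorem MvPolynomial.natCast_mul_aeval_esymm_mem {σ R : Type*} [Fintype σ] [CommRing R]
    (I : Ideal R) (v : σ → R) (k : ℕ)
    (hv : ∀ b, 0 < b → b ≤ k → ∑ i, v i ^ b ∈ I) :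
    (k : R) * aeval v (esymm σ ℤ k) ∈ I := by
  have newton := congrArg (aeval v) (mul_esymm_eq_sum σ ℤ k)
  simp only [map_mul, map_natCast, map_pow, map_neg, map_one, map_sum] at newton
  rw [newton]
  refine I.mul_mem_left _ (I.sum_mem fun a ha => I.mul_mem_left _ ?_)
  obtain ⟨hsum, hlt⟩ := Finset.mem_filter.mp ha
  rw [Finset.HasAntidiagonal.mem_antidiagonal] at hsum
  simpa [psum] using hv a.2 (by omega) (by omega)

theorem RingHom.map_eq_zero_of_pow_dvd_natCast_mul {R K : Type*} [CommRing R] [IsDomain R]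
    [CommRing K] [IsDomain K] {p : ℕ} [CharP K p] (hp : p.Prime) (hpR : (p : R) ≠ 0)
    (ψ : R →+* K) {n j : ℕ} (hj0 : j ≠ 0) (hj : j < p ^ n) {x : R}
    (hx : (p : R) ^ n ∣ j * x) : ψ x = 0 := by
  obtain ⟨a, j', hpj', rfl⟩ := Nat.exists_eq_pow_mul_and_not_dvd hj0 p hp.ne_one
  have ha : a < n := (Nat.pow_lt_pow_iff_right hp.one_lt).mp
    ((Nat.le_mul_of_pos_right _ (Nat.pos_of_ne_zero (by rintro rfl; simp at hj0))).trans_lt hj)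
  obtain ⟨B, hB⟩ := hx
  have hcancel : (j' : R) * x = (p : R) ^ (n - a) * B := by
    refine mul_left_cancel₀ (pow_ne_zero a hpR) ?_
    rw [← mul_assoc, ← mul_assoc, ← pow_add, Nat.add_sub_cancel' ha.le]
    push_cast at hB
    linear_combination hB
  have hψ := congrArg ψ hcancel
  rw [map_mul, map_mul, map_pow, map_natCast, map_natCast, CharP.cast_eq_zero K p,
    zero_pow (Nat.sub_ne_zero_of_lt ha), zero_mul] at hψ
  exact (mul_eq_zero.mp hψ).resolve_left fun h0 => hpj' ((CharP.cast_eq_zero_iff K p _).mp h0)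

namespace FiniteField

variable {K : Type*} [Field K] [Fintype K]

theorem sum_map_pow_eq_zero {R : Type*} [CommRing R] [IsDomain R] (T : K →* R)
    (hT : Function.Injective T) {l : ℕ} (hl : ¬ Fintype.card K - 1 ∣ l) :
    ∑ z, T z ^ l = 0 := by
  obtain ⟨c, hc⟩ : ∃ c : Kˣ, c ^ l ≠ 1 := by
    simpa [← FiniteField.forall_pow_eq_one_iff] using hl
  have hTc : T c ^ l ≠ 1 := fun h1 =>
    hc (Units.ext (hT (by rw [Units.val_pow_eq_pow_val, map_pow, h1, Units.val_one, map_one])))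
  have hrot : ∑ z, T z ^ l = T c ^ l * ∑ z, T z ^ l := by
    rw [Finset.mul_sum, ← Equiv.sum_comp (Equiv.mulLeft₀ (c : K) c.ne_zero)]
    simp only [Equiv.mulLeft₀_apply, map_mul, mul_pow]
  have hzero : (T c ^ l - 1) * ∑ z, T z ^ l = 0 := by linear_combination -hrot
  exact (mul_eq_zero.mp hzero).resolve_left (sub_ne_zero.mpr hTc)

theorem esymm_map_eval_eq_zero (h : K[X]) (hd : 0 < h.natDegree) {j : ℕ} (hj : 0 < j)
    (hjd : h.natDegree * j ≤ Fintype.card K - 2) :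
    (Finset.univ.val.map fun z => h.eval z).esymm j = 0 := by
  obtain ⟨n, hp, hq⟩ := FiniteField.card K (ringChar K)
  set p := ringChar K
  have : Fact p.Prime := ⟨hp⟩
  let ψ : WittVector p K →+* K := WittVector.constantCoeff
  let T : K →* WittVector p K := WittVector.teichmuller p
  have hψT (z : K) : ψ (T z) = z := WittVector.teichmuller_coeff_zero p z
  obtain ⟨H, hHh, hHd⟩ := exists_natDegree_eq_of_mem_lifts
    (mem_lifts_of_surjective (fun z => ⟨T z, hψT z⟩) h)
  have hT : Function.Injective T := fun a b hab => by simpa [hψT] using congrArg ψ hab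
  let v : K → WittVector p K := fun z => H.eval (T z)
  have hψv (z : K) : ψ (v z) = h.eval z := by
    rw [← hψT z, ← hHh, eval_map, eval₂_at_apply, hψT]
  have hpsum (b : ℕ) (hb : 0 < b) (hbj : b ≤ j) :
      ∑ z, v z ^ b ∈ Ideal.span {((Fintype.card K : ℕ) : WittVector p K)} := by
    have hdeg : (H ^ b).natDegree < Fintype.card K - 1 :=
      calc (H ^ b).natDegree ≤ b * H.natDegree := natDegree_pow_le
        _ = h.natDegree * b := by rw [hHd, mul_comm]
        _ ≤ h.natDegree * j := Nat.mul_le_mul_left _ hbj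
        _ < Fintype.card K - 1 := by have := Fintype.one_lt_card (α := K); omega
    simp_rw [v, ← eval_pow]
    rw [sum_eval_eq_card_mul_coeff_zero (N := Fintype.card K - 1) (fun l hl hlq =>
      sum_map_pow_eq_zero T hT (Nat.not_dvd_of_pos_of_lt hl hlq)) hdeg]
    exact Ideal.mul_mem_right _ _ (Ideal.mem_span_singleton_self _)
  have hj_lt : j < p ^ (n : ℕ) := by
    have := Nat.le_mul_of_pos_left j hd; have := Fintype.one_lt_card (α := K); omega
  have hdvd := Ideal.mem_span_singleton.mp (MvPolynomial.natCast_mul_aeval_esymm_mem _ v j hpsum)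
  rw [hq, Nat.cast_pow] at hdvd
  have hψe := ψ.map_eq_zero_of_pow_dvd_natCast_mul hp (WittVector.p_nonzero p K) hj.ne' hj_lt hdvd
  rw [MvPolynomial.aeval_esymm_eq_multiset_esymm, Finset.esymm_map_val, map_sum] at hψe
  simpa only [map_prod, hψv, Finset.esymm_map_val] using hψe

theorem card_toFinset_add_le_of_esymm_eq_zero [DecidableEq K] (s : Multiset K)
    (hs : Multiset.card s = Fintype.card K) {k : ℕ} (hk : k + 2 ≤ Fintype.card K)
    (hesymm : ∀ j, 0 < j → j ≤ k → s.esymm j = 0) (hmiss : ∃ c, c ∉ s) :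
    s.toFinset.card + (k + 1) ≤ Fintype.card K := by
  set q := Fintype.card K
  set P := (s.map fun t => X - C t).prod
  have hP (N : ℕ) (hN : N ≤ q) : P.coeff N = (-1) ^ (q - N) * s.esymm (q - N) := by
    rw [← hs]; exact Multiset.prod_X_sub_C_coeff s (hs ▸ hN)
  have hPdeg : P.natDegree = q := by rw [← hs]; exact natDegree_multiset_prod_X_sub_C_eq_card s
  set D := P - (X ^ q - X)
  have hfrob (c : K) : c ^ q = c := FiniteField.pow_card c
  have hDdeg : D.natDegree ≤ q - (k + 1) := by
    rw [natDegree_le_iff_coeff_eq_zero]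
    intro N hN
    simp only [D, coeff_sub, coeff_X_pow, coeff_X]
    rcases lt_trichotomy N q with hlt | heq | hgt
    · rw [hP N hlt.le, hesymm (q - N) (by omega) (by omega)]
      simp [show N ≠ q by omega, show 1 ≠ N by omega]
    · rw [hP N heq.le]
      simp [heq, Multiset.esymm, show 1 ≠ q by omega]
    · rw [coeff_eq_zero_of_natDegree_lt (hPdeg ▸ hgt)]
      simp [show N ≠ q by omega, show 1 ≠ N by omega]
  have hPeval (c : K) : P.eval c = (s.map fun t => c - t).prod := by
    simp [P, eval_multiset_prod, Multiset.map_map]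
  have hD0 : D ≠ 0 := by
    obtain ⟨c, hc⟩ := hmiss
    intro hD
    have hPc : P.eval c = 0 := by
      rw [sub_eq_zero.mp hD]; simp [hfrob]
    rw [hPeval, Multiset.prod_eq_zero_iff] at hPc
    obtain ⟨t, ht, hct⟩ := Multiset.mem_map.mp hPc
    exact hc (sub_eq_zero.mp hct ▸ ht)
  have hroots : s.toFinset ⊆ D.roots.toFinset := by
    intro t ht
    rw [Multiset.mem_toFinset] at ht
    rw [Multiset.mem_toFinset, mem_roots hD0, IsRoot, eval_sub, hPeval,
      Multiset.prod_eq_zero (Multiset.mem_map.mpr ⟨t, ht, sub_self t⟩)]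
    simp [hfrob]
  have := (Finset.card_le_card hroots).trans
    ((Multiset.toFinset_card_le _).trans ((card_roots' D).trans hDdeg))
  omega

theorem card_sub_one_le_natDegree_mul_card_compl_range (h : K[X]) (hd : 0 < h.natDegree)
    (hns : ¬ Function.Surjective fun z => h.eval z) :
    Fintype.card K - 1 ≤ h.natDegree * Nat.card ((Set.range fun z => h.eval z)ᶜ : Set K) := by
  classical
  set q := Fintype.card K
  set d := h.natDegree
  have hq := Fintype.one_lt_card (α := K)
  obtain ⟨c, hc⟩ : ∃ c, c ∉ Finset.univ.val.map fun z => h.eval z := by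
    simpa [Function.Surjective] using hns
  have hbound := card_toFinset_add_le_of_esymm_eq_zero (Finset.univ.val.map fun z => h.eval z)
    (by simp) (k := (q - 2) / d) (by have := Nat.div_le_self (q - 2) d; omega)
    (fun j hj hjk => esymm_map_eval_eq_zero h hd hj
      ((Nat.mul_le_mul_left d hjk).trans (Nat.mul_div_le (q - 2) d)))
    ⟨c, hc⟩
  have hcompl : Nat.card ((Set.range fun z => h.eval z)ᶜ : Set K) =
      q - (Finset.univ.val.map fun z => h.eval z).toFinset.card := by
    rw [Nat.card_eq_card_toFinset, Set.toFinset_compl, Finset.card_compl, Set.toFinset_range]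
    rfl
  rw [hcompl]
  have := Nat.lt_mul_div_succ (q - 2) hd
  have := Nat.mul_le_mul_left d (show (q - 2) / d + 1 ≤
    q - (Finset.univ.val.map fun z => h.eval z).toFinset.card by omega)
  omega

end FiniteField

def sl2OfTrace {R : Type} [CommRing R] (t a : R) (b : Rˣ) : SL2 R :=
  ⟨!![a, b; ↑b⁻¹ * (a * (t - a) - 1), t - a], by
    rw [Matrix.det_fin_two_of]
    linear_combination -(a * (t - a) - 1) * b.mul_inv⟩

theorem trace_sl2OfTrace {R : Type} [CommRing R] (t a : R) (b : Rˣ) :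
    trace (sl2OfTrace t a b : Matrix (Fin 2) (Fin 2) R) = t := by
  simp [sl2OfTrace, Matrix.trace_fin_two_of]

theorem sl2OfTrace_injective {R : Type} [CommRing R] :
    Function.Injective fun x : R × R × Rˣ => sl2OfTrace x.1 x.2.1 x.2.2 := by
  rintro ⟨t, a, b⟩ ⟨t', a', b'⟩ heq
  have hM := congrArg (fun A : SL2 R => (A : Matrix (Fin 2) (Fin 2) R)) heq
  have ha : a = a' := by simpa [sl2OfTrace] using congrFun (congrFun hM 0) 0
  have hb : (b : R) = b' := by simpa [sl2OfTrace] using congrFun (congrFun hM 0) 1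
  have ht : t = t' := by
    simpa [trace_sl2OfTrace] using
      congrArg (fun A : SL2 R => trace (A : Matrix (Fin 2) (Fin 2) R)) heq
  rw [ht, ha, Units.ext hb]

theorem card_mul_card_le_card_trace_mem {R : Type} [CommRing R] [Finite R] (S : Set R) :
    Nat.card S * (Nat.card R * Nat.card Rˣ) ≤
      Nat.card {A : SL2 R | trace (A : Matrix (Fin 2) (Fin 2) R) ∈ S} := by
  rw [← Nat.card_prod, ← Nat.card_prod]
  refine Nat.card_le_card_of_injective
    (fun x : S × R × Rˣ => ⟨sl2OfTrace x.1 x.2.1 x.2.2,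
      by simpa only [Set.mem_ofPred_eq, trace_sl2OfTrace] using x.1.2⟩) ?_
  intro x y hxy
  obtain ⟨ht, hrest⟩ := Prod.mk.inj (sl2OfTrace_injective (a₁ := (x.1.1, x.2))
    (a₂ := (y.1.1, y.2)) (congrArg Subtype.val hxy))
  exact Prod.ext (Subtype.ext ht) hrest

theorem FiniteField.card_mul_div_natDegree_le_card_trace_notMem_range {K : Type} [Field K]
    [Fintype K] (h : K[X]) (hd : 0 < h.natDegree)
    (hns : ¬ Function.Surjective fun z => h.eval z) :
    (Fintype.card K : ℝ) * (Fintype.card K - 1) * ((Fintype.card K - 1) / h.natDegree) ≤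
      Nat.card {A : SL2 K |
        trace (A : Matrix (Fin 2) (Fin 2) K) ∉ Set.range fun z => h.eval z} := by
  set q := Fintype.card K
  have hwan := card_sub_one_le_natDegree_mul_card_compl_range h hd hns
  have hcount := card_mul_card_le_card_trace_mem (Set.range fun z => h.eval z)ᶜ
  rw [Nat.card_units, Nat.card_eq_fintype_card (α := K)] at hcount
  have hq1 : ((q - 1 : ℕ) : ℝ) = (q : ℝ) - 1 := by
    rw [Nat.cast_sub Fintype.card_pos]; push_cast; ring
  set N := Nat.card ((Set.range fun z => h.eval z)ᶜ : Set K)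
  have hmissed : ((q : ℝ) - 1) / h.natDegree ≤ N := by
    rw [div_le_iff₀ (by positivity), ← hq1, mul_comm]
    exact_mod_cast hwan
  calc (q : ℝ) * (q - 1) * ((q - 1) / h.natDegree) ≤ (q : ℝ) * (q - 1) * N := by
        gcongr
        rw [← hq1]; positivity
    _ = ((N * (q * (q - 1)) : ℕ) : ℝ) := by push_cast [hq1]; ring
    _ ≤ _ := Nat.cast_le.mpr hcount

theorem trace_wordEval_eq_aeval {w : FreeGroup (Fin 2)} {f : MvPolynomial (Fin 3) ℤ}
    (hf : IsTracePolynomial w f) {p : ℕ} {Q : MvPolynomial (Fin 3) (ZMod p)} {h : (ZMod p)[X]}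
    (hdec : MvPolynomial.map (Int.castRingHom (ZMod p)) f = aeval Q h)
    {K : Type} [CommRing K] [Algebra (ZMod p) K] (x y : SL2 K) :
    trace ((wordEval w x y : SL2 K) : Matrix (Fin 2) (Fin 2) K) =
      aeval (MvPolynomial.aeval (trPoint x y) Q) h := by
  have hcast : Int.castRingHom K = (algebraMap (ZMod p) K).comp (Int.castRingHom (ZMod p)) :=
    Subsingleton.elim _ _
  rw [hf K x y, hcast, ← MvPolynomial.map_map, hdec, MvPolynomial.eval_map,
    ← MvPolynomial.aeval_def, aeval_algHom_apply]

theorem word_map_image_omits_values (w : FreeGroup (Fin 2))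
    (f : MvPolynomial (Fin 3) ℤ) (hf : IsTracePolynomial w f)
    (p : ℕ) (hp : p.Prime) (n : ℕ) (hn : 0 < n)
    (Q : MvPolynomial (Fin 3) (ZMod p)) (h : Polynomial (ZMod p)) (d₁ : ℕ)
    (hd : h.natDegree = d₁) (hd2 : 2 ≤ d₁)
    (hdec : MvPolynomial.map (Int.castRingHom (ZMod p)) f = Polynomial.aeval Q h)
    (hns : letI : Fact p.Prime := ⟨hp⟩
      ¬ Function.Surjective fun z : GaloisField p n => Polynomial.aeval z h) :
    letI : Fact p.Prime := ⟨hp⟩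
    ((p : ℝ) ^ n * ((p : ℝ) ^ n - 1)) * (((p : ℝ) ^ n - 1) / d₁ - 2) ≤
      Nat.card ((Set.range (wordMap w (GaloisField p n)))ᶜ : Set (SL2 (GaloisField p n))) := by
  have : Fact p.Prime := ⟨hp⟩
  let K := GaloisField p n
  let : Fintype K := Fintype.ofFinite K
  have hq : (Fintype.card K : ℝ) = (p : ℝ) ^ n := by
    rw [← Nat.card_eq_fintype_card, GaloisField.card p n hn.ne']; push_cast; rfl
  let hK : K[X] := h.map (algebraMap (ZMod p) K)
  have hKeval (z : K) : hK.eval z = aeval z h := eval_map_algebraMap h z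
  have hKdeg : hK.natDegree = d₁ := by rw [natDegree_map, hd]
  have hmissed : {A : SL2 K | trace (A : Matrix (Fin 2) (Fin 2) K) ∉ Set.range fun z => hK.eval z}
      ⊆ (Set.range (wordMap w K))ᶜ := by
    rintro A hA ⟨⟨x, y⟩, rfl⟩
    exact hA ⟨_, (hKeval _).trans (trace_wordEval_eq_aeval hf hdec x y).symm⟩
  have hbound := FiniteField.card_mul_div_natDegree_le_card_trace_notMem_range hK
    (by omega) (by simpa only [hKeval] using hns)
  rw [hq, hKdeg] at hbound
  have hq_one : 1 ≤ (p : ℝ) ^ n := one_le_pow₀ (by exact_mod_cast hp.one_lt.le)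
  calc ((p : ℝ) ^ n * ((p : ℝ) ^ n - 1)) * (((p : ℝ) ^ n - 1) / d₁ - 2)
      ≤ (p : ℝ) ^ n * ((p : ℝ) ^ n - 1) * (((p : ℝ) ^ n - 1) / d₁) := by nlinarith
    _ ≤ _ := hbound
    _ ≤ _ := by exact_mod_cast Nat.card_mono (Set.toFinite _) hmissed
end
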